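/- Σ_{n=1}^{m−1} 1/sin²(nπ/m) = (m²−1)/3 for every integer m ≥ 2. -/
import Mathlib
open Real Finset

lemma aux_sum_id (N : ℕ) : ∑ j ∈ range N, (j:ℂ) = N*(N-1)/2 := by
  induction N with
  | zero => simp
  | succ n ih => rw [Finset.sum_range_succ, ih]; push_cast; ring

lemma aux_sum_sq (N : ℕ) : ∑ j ∈ range N, (j:ℂ)^2 = N*(N-1)*(2*N-1)/6 := by
  induction N with
  | zero => simp
  | succ n ih => rw [Finset.sum_range_succ, ih]; push_cast; ring

lemma aux_tel (z : ℂ) (N : ℕ) :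
    (1-z) * ∑ k ∈ range N, (k:ℂ)*z^k = (∑ k ∈ range N, z^k) - 1 - ((N:ℂ)-1)*z^N := by
  induction N with
  | zero => simp
  | succ n ih =>
    rw [Finset.sum_range_succ, Finset.sum_range_succ (f := fun k => z^k), mul_add, ih]
    push_cast; ring

lemma aux_inv_rep (m : ℕ) (hm : 1 ≤ m) (z : ℂ) (hz1 : z ≠ 1) (hzm : z^m = 1) :
    (1 - z)⁻¹ = -(1/m) * ∑ k ∈ range m, (k:ℂ) * z^k := by
  have hg : ∑ k ∈ range m, z^k = 0 := by
    rw [geom_sum_eq hz1, hzm]; simp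
  have h := aux_tel z m
  rw [hg, hzm] at h
  have hm0 : (m:ℂ) ≠ 0 := Nat.cast_ne_zero.mpr (by omega)
  have h1z : (1:ℂ) - z ≠ 0 := sub_ne_zero.mpr (Ne.symm hz1)
  field_simp at h ⊢
  linear_combination h

lemma aux_geomIcc (m : ℕ) (hm : 1 ≤ m) (z : ℂ) (hzm : z^m = 1) :
    ∑ n ∈ Icc 1 (m-1), z^n = (if z = 1 then (m:ℂ) else 0) - 1 := by
  have hr : Finset.range m = insert 0 (Finset.Icc 1 (m-1)) := by
    ext x; simp [Finset.mem_range, Finset.mem_Icc]; omega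
  have hsum : ∑ n ∈ range m, z^n = 1 + ∑ n ∈ Icc 1 (m-1), z^n := by
    rw [hr, Finset.sum_insert (by simp)]; simp
  by_cases h1 : z = 1
  · subst h1; simp at hsum ⊢; push_cast [Nat.cast_sub (by omega : 1 ≤ m)]; ring
  · have hg : ∑ k ∈ range m, z^k = 0 := by rw [geom_sum_eq h1, hzm]; simp
    rw [hg] at hsum; simp only [h1, if_false]; linear_combination -hsum

lemma aux_q (z : ℂ) (hz : z ≠ 0) : 4*(z⁻¹ - (z⁻¹)^2) = 4*(z-1)/z^2 := by
  field_simp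

lemma aux_term (m n : ℕ) (hm : 2 ≤ m) (hn : n ∈ Finset.Icc 1 (m-1)) :
    ((1 / (Real.sin ((n : ℝ) * Real.pi / m)) ^ 2 : ℝ) : ℂ) =
      4 * ((1 - Complex.exp (2 * Real.pi * Complex.I / m) ^ n)⁻¹
        - ((1 - Complex.exp (2 * Real.pi * Complex.I / m) ^ n)⁻¹)^2) := by
  simp only [Finset.mem_Icc] at hn
  have hm0 : (0:ℝ) < m := by positivity
  have hθpos : 0 < (n : ℝ) * Real.pi / m := by
    apply div_pos (mul_pos _ Real.pi_pos) hm0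
    exact_mod_cast Nat.pos_of_ne_zero (by omega)
  have hθlt : (n : ℝ) * Real.pi / m < Real.pi := by
    rw [div_lt_iff₀ hm0]
    have : (n:ℝ) < m := by exact_mod_cast (by omega : n < m)
    nlinarith [Real.pi_pos]
  have hs : Real.sin ((n : ℝ) * Real.pi / m) ≠ 0 :=
    ne_of_gt (Real.sin_pos_of_pos_of_lt_pi hθpos hθlt)
  set s : ℂ := (Real.sin ((n : ℝ) * Real.pi / m) : ℂ) with hsdef
  set c : ℂ := (Real.cos ((n : ℝ) * Real.pi / m) : ℂ) with hcdef
  have hω : Complex.exp (2 * Real.pi * Complex.I / m) ^ n = (c + s * Complex.I) ^ 2 := by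
    rw [← Complex.exp_nat_mul]
    have hm0' : (m:ℂ) ≠ 0 := Nat.cast_ne_zero.mpr (by omega)
    have harg : (n:ℂ) * (2 * (Real.pi:ℂ) * Complex.I / m) =
        ((((n : ℝ) * Real.pi / m : ℝ)):ℂ) * Complex.I + ((((n : ℝ) * Real.pi / m : ℝ)):ℂ) * Complex.I := by
      push_cast
      field_simp
      ring
    rw [harg, Complex.exp_add, Complex.exp_mul_I, hsdef, hcdef,
      Complex.ofReal_sin, Complex.ofReal_cos]
    ring
  have hpyth : c ^ 2 + s ^ 2 = 1 := by
    rw [hsdef, hcdef]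
    norm_cast
    rw [add_comm]
    exact Real.sin_sq_add_cos_sq _
  have hukey : (c + s * Complex.I)^2 - 2 * s * Complex.I * (c + s * Complex.I) = 1 := by
    linear_combination hpyth - s^2 * Complex.I_sq
  have hu0 : c + s * Complex.I ≠ 0 := by
    intro h
    rw [h] at hukey
    simp at hukey
  have h1ω : 1 - Complex.exp (2 * Real.pi * Complex.I / m) ^ n
      = -2 * s * Complex.I * (c + s * Complex.I) := by
    rw [hω]; linear_combination -hukey
  rw [h1ω]
  have hs' : s ≠ 0 := Complex.ofReal_ne_zero.mpr hs
  have hz : (-2 * s * Complex.I * (c + s * Complex.I)) ≠ 0 :=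
    mul_ne_zero (mul_ne_zero (mul_ne_zero (by norm_num) hs') Complex.I_ne_zero) hu0
  rw [Complex.ofReal_div, Complex.ofReal_one, Complex.ofReal_pow, ← hsdef]
  have hzsq : (-2 * s * Complex.I * (c + s * Complex.I))^2
      = -4 * s^2 * (c + s * Complex.I)^2 := by
    linear_combination (4*s^2*(c + s*Complex.I)^2) * Complex.I_sq
  have hzm1 : (-2 * s * Complex.I * (c + s * Complex.I)) - 1 = -(c + s * Complex.I)^2 := by
    linear_combination -hukey + 2*hpyth - 2*s^2*Complex.I_sq
  rw [aux_q _ hz, hzm1, hzsq]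
  field_simp

lemma aux_dvd_iff (m j k : ℕ) (hj : j < m) (hk : k < m) :
    m ∣ (j + k) ↔ k = (m - j) % m := by
  constructor
  · rintro ⟨c, hc⟩
    have hc2 : c ≤ 1 := by nlinarith
    interval_cases c
    · have hj0 : j = 0 := by omega
      have hk0 : k = 0 := by omega
      subst hj0; subst hk0; simp
    · have hj1 : 1 ≤ j := by omega
      rw [Nat.mod_eq_of_lt (by omega)]
      omega
  · intro h
    rcases Nat.eq_zero_or_pos j with h0 | h0
    · subst h0; simp [Nat.mod_self] at h; simp [h]
    · have : (m - j) % m = m - j := Nat.mod_eq_of_lt (by omega)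
      rw [this] at h
      subst h
      exact ⟨1, by omega⟩

lemma aux_pair (m j : ℕ) (hm : 1 ≤ m) (hj : j < m) :
    ∑ k ∈ range m, (if m ∣ (j + k) then (j:ℂ) * k else 0) = (j:ℂ) * ((m:ℂ) - j) := by
  have h1 : ∑ k ∈ range m, (if m ∣ (j + k) then (j:ℂ) * k else 0)
      = ∑ k ∈ range m, (if k = (m - j) % m then (j:ℂ) * k else 0) := by
    apply Finset.sum_congr rfl
    intro k hk
    rw [Finset.mem_range] at hk
    exact if_congr (aux_dvd_iff m j k hj hk) rfl rfl
  rw [h1, Finset.sum_ite_eq' (range m) ((m - j) % m) (fun k => (j:ℂ) * k)]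
  rw [if_pos (Finset.mem_range.mpr (Nat.mod_lt _ (by omega)))]
  rcases Nat.eq_zero_or_pos j with h0 | h0
  · subst h0; simp
  · rw [Nat.mod_eq_of_lt (by omega : m - j < m), Nat.cast_sub (by omega : j ≤ m)]

lemma aux_inner (m : ℕ) (hm : 2 ≤ m) (k : ℕ) :
    ∑ n ∈ Finset.Icc 1 (m-1), (Complex.exp (2 * Real.pi * Complex.I / m) ^ k) ^ n
      = (if m ∣ k then (m:ℂ) else 0) - 1 := by
  have hprim := Complex.isPrimitiveRoot_exp m (by omega)
  have h1 : (Complex.exp (2 * Real.pi * Complex.I / m) ^ k) ^ m = 1 := by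
    rw [← pow_mul, Nat.mul_comm k m, pow_mul, (hprim.pow_eq_one_iff_dvd m).mpr dvd_rfl, one_pow]
  rw [aux_geomIcc m (by omega) _ h1]
  congr 2
  exact propext (hprim.pow_eq_one_iff_dvd k)

/-- The classical identity `∑_{n=1}^{m−1} 1/sin²(nπ/m) = (m²−1)/3` for `m ≥ 2`. -/
theorem sum_inv_sin_sq (m : ℕ) (hm : 2 ≤ m) :
    ∑ n ∈ Finset.Icc 1 (m - 1),
        1 / (Real.sin ((n : ℝ) * Real.pi / m)) ^ 2 = ((m : ℝ) ^ 2 - 1) / 3 := by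
  have hm0 : (m:ℂ) ≠ 0 := Nat.cast_ne_zero.mpr (by omega)
  have hprim := Complex.isPrimitiveRoot_exp m (by omega : m ≠ 0)
  apply Complex.ofReal_injective
  rw [Complex.ofReal_sum]
  rw [Finset.sum_congr rfl (fun n hn => aux_term m n hm hn)]
  have hrep : ∀ n ∈ Finset.Icc 1 (m-1),
      (1 - Complex.exp (2 * Real.pi * Complex.I / m) ^ n)⁻¹
        = -(1/(m:ℂ)) * ∑ k ∈ range m, (k:ℂ) * (Complex.exp (2 * Real.pi * Complex.I / m) ^ k) ^ n := by
    intro n hn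
    rw [Finset.mem_Icc] at hn
    have hne : Complex.exp (2 * Real.pi * Complex.I / m) ^ n ≠ 1 :=
      hprim.pow_ne_one_of_pos_of_lt (by omega) (by omega)
    have h1 : (Complex.exp (2 * Real.pi * Complex.I / m) ^ n) ^ m = 1 := by
      rw [← pow_mul, Nat.mul_comm n m, pow_mul, (hprim.pow_eq_one_iff_dvd m).mpr dvd_rfl, one_pow]
    rw [aux_inv_rep m (by omega) _ hne h1]
    congr 1
    apply Finset.sum_congr rfl
    intro k _
    rw [← pow_mul, ← pow_mul, Nat.mul_comm]
  have hS : ∑ n ∈ Finset.Icc 1 (m-1), (1 - Complex.exp (2 * Real.pi * Complex.I / m) ^ n)⁻¹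
      = ((m:ℂ)-1)/2 := by
    rw [Finset.sum_congr rfl hrep, ← Finset.mul_sum, Finset.sum_comm]
    have h1 : ∀ k ∈ range m,
        ∑ n ∈ Finset.Icc 1 (m-1), (k:ℂ) * (Complex.exp (2 * Real.pi * Complex.I / m) ^ k) ^ n
          = -(k:ℂ) := by
      intro k hk
      rw [Finset.mem_range] at hk
      rw [← Finset.mul_sum, aux_inner m hm k]
      by_cases h0 : k = 0
      · subst h0; simp
      · rw [if_neg (fun hd => h0 (Nat.eq_zero_of_dvd_of_lt hd hk))]
        ring
    rw [Finset.sum_congr rfl h1, Finset.sum_neg_distrib, aux_sum_id]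
    field_simp
  have hT : ∑ n ∈ Finset.Icc 1 (m-1),
      ((1 - Complex.exp (2 * Real.pi * Complex.I / m) ^ n)⁻¹)^2
      = ((m:ℂ)-1)*(5-(m:ℂ))/12 := by
    have h2 : ∀ n ∈ Finset.Icc 1 (m-1),
        ((1 - Complex.exp (2 * Real.pi * Complex.I / m) ^ n)⁻¹)^2
        = (1/(m:ℂ)^2) * ∑ j ∈ range m, ∑ k ∈ range m,
            ((j:ℂ)*(k:ℂ)) * (Complex.exp (2 * Real.pi * Complex.I / m) ^ (j+k)) ^ n := by
      intro n hn
      rw [hrep n hn]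
      have expand : (∑ k ∈ range m, (k:ℂ) * (Complex.exp (2 * Real.pi * Complex.I / m) ^ k) ^ n)
            * (∑ k ∈ range m, (k:ℂ) * (Complex.exp (2 * Real.pi * Complex.I / m) ^ k) ^ n)
          = ∑ j ∈ range m, ∑ k ∈ range m,
              ((j:ℂ)*(k:ℂ)) * (Complex.exp (2 * Real.pi * Complex.I / m) ^ (j+k)) ^ n := by
        rw [Finset.sum_mul_sum]
        apply Finset.sum_congr rfl; intro j _
        apply Finset.sum_congr rfl; intro k _
        rw [pow_add, mul_pow]
        ring
      rw [← expand]
      ring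
    rw [Finset.sum_congr rfl h2, ← Finset.mul_sum, Finset.sum_comm]
    have h3 : ∀ j ∈ range m,
        ∑ n ∈ Finset.Icc 1 (m-1), ∑ k ∈ range m,
            ((j:ℂ)*(k:ℂ)) * (Complex.exp (2 * Real.pi * Complex.I / m) ^ (j+k)) ^ n
          = (m:ℂ) * ((j:ℂ) * ((m:ℂ) - j)) - (j:ℂ) * ((m:ℂ)*((m:ℂ)-1)/2) := by
      intro j hj
      rw [Finset.mem_range] at hj
      rw [Finset.sum_comm]
      have h4 : ∀ k ∈ range m,
          ∑ n ∈ Finset.Icc 1 (m-1),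
              ((j:ℂ)*(k:ℂ)) * (Complex.exp (2 * Real.pi * Complex.I / m) ^ (j+k)) ^ n
            = (m:ℂ) * (if m ∣ (j+k) then (j:ℂ)*k else 0) - (j:ℂ)*(k:ℂ) := by
        intro k _
        rw [← Finset.mul_sum, aux_inner m hm (j+k)]
        by_cases hd : m ∣ (j+k)
        · rw [if_pos hd, if_pos hd]; ring
        · rw [if_neg hd, if_neg hd]; ring
      rw [Finset.sum_congr rfl h4, Finset.sum_sub_distrib, ← Finset.mul_sum,
        aux_pair m j (by omega) hj, ← Finset.mul_sum, aux_sum_id]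
    rw [Finset.sum_congr rfl h3, Finset.sum_sub_distrib]
    have h5 : ∀ j ∈ range m, (m:ℂ) * ((j:ℂ) * ((m:ℂ) - j))
        = (m:ℂ)*(m:ℂ)*(j:ℂ) - (m:ℂ)*(j:ℂ)^2 := by
      intro j _; ring
    rw [Finset.sum_congr rfl h5, Finset.sum_sub_distrib, ← Finset.mul_sum, ← Finset.mul_sum,
      ← Finset.sum_mul, aux_sum_id, aux_sum_sq]
    field_simp
    ring
  rw [← Finset.mul_sum, Finset.sum_sub_distrib, hS, hT]
  push_cast
  field_simp
  ring
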